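/- If p is a univariate real polynomial of degree at most M, then its derivative satisfies the Markov inequality: sup_{x ∈ [-1,1]} |p'(x)| ≤ M² · sup_{x ∈ [-1,1]} |p(x)|. -/

import Mathlib

/-!
Substituting `x = cos θ` turns `p` into a trigonometric polynomial of degree `M`, and the estimates
are proved for any such `f`. A nonzero `f` has at most `2M` zeros in a period. Hence, if `|f| < 1`,
then `f` meets the wave `sin (M (θ - t))` at most once within `π / (2M)` of `t`: the difference
changes sign between the `2M + 1` equally spaced nodes where the wave is `∓1`, which already
accounts for `2M` zeros. Sending such a wave through a point where `f` is steeper gives Bernstein's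
inequality `|f'| ≤ M sup |f|`; scaling `f` to meet the wave at a second point next to a zero `t` of
`f` gives Schur's bound `|f θ| ≤ sup |f| · |sin (M (θ - t))|`, hence, with Jordan's inequality,
`|f θ| ≤ M sup |f| · |sin (θ - t)|` for `|θ - t| ≤ π / 2`. Applied to `sin θ · p' (cos θ)`, which
vanishes at `0` and `π` and is bounded by `M sup |p|` by Bernstein, this gives
`|p' (cos θ)| ≤ M² sup |p|`.
-/

open Polynomial Real Set Filter Topology

theorem exists_mem_Ioo_eq_zero_of_mul_neg {g : ℝ → ℝ} (hg : Continuous g) {a b : ℝ}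
    (hab : a ≤ b) (h : g a * g b < 0) : ∃ z ∈ Ioo a b, g z = 0 := by
  rcases mul_neg_iff.1 h with ⟨ha, hb⟩ | ⟨ha, hb⟩
  · exact intermediate_value_Ioo' hab hg.continuousOn ⟨hb, ha⟩
  · exact intermediate_value_Ioo hab hg.continuousOn ⟨ha, hb⟩

theorem exists_finset_zeros_of_mul_neg {g : ℝ → ℝ} (hg : Continuous g) {e : ℕ → ℝ}
    (he : StrictMono e) {n : ℕ} (h : ∀ k < n, g (e k) * g (e (k + 1)) < 0) :
    ∃ S : Finset ℝ, S.card = n ∧ ↑S ⊆ Ioo (e 0) (e n) ∧ ∀ z ∈ S, g z = 0 := by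
  induction n with
  | zero => exact ⟨∅, rfl, by simp, by simp⟩
  | succ n ih =>
    obtain ⟨S, hcard, hsub, hzero⟩ := ih fun k hk => h k (by omega)
    obtain ⟨z, hz, hgz⟩ := exists_mem_Ioo_eq_zero_of_mul_neg hg (he n.lt_succ_self).le
      (h n n.lt_succ_self)
    have hzS : z ∉ S := fun hzS => (hsub hzS).2.not_gt hz.1
    refine ⟨insert z S, by rw [Finset.card_insert_of_notMem hzS, hcard], ?_, ?_⟩
    · rw [Finset.coe_insert, insert_subset_iff]
      exact ⟨⟨(he.monotone n.zero_le).trans_lt hz.1, hz.2⟩,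
        hsub.trans (Ioo_subset_Ioo_right (he n.lt_succ_self).le)⟩
    · simpa [hgz] using hzero

theorem exists_mem_Ioo_eq_zero_of_hasDerivAt_pos {g : ℝ → ℝ} (hg : Continuous g) {D a x : ℝ}
    (hD : HasDerivAt g D x) (hD0 : 0 < D) (hgx : g x = 0) (hax : a < x) (hga : 0 < g a) :
    ∃ z ∈ Ioo a x, g z = 0 := by
  have hslope : ∀ᶠ y in 𝓝[<] x, 0 < slope g x y :=
    nhdsLT_le_nhdsNE x ((hasDerivAt_iff_tendsto_slope.1 hD).eventually (eventually_gt_nhds hD0))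
  obtain ⟨v, hv, hav, hvx⟩ := (hslope.and (Ioo_mem_nhdsLT hax)).exists
  have hgv : g v < 0 := neg_of_slope_pos hvx hv hgx
  obtain ⟨z, hz, hgz⟩ :=
    exists_mem_Ioo_eq_zero_of_mul_neg hg hav.le (mul_neg_of_pos_of_neg hga hgv)
  exact ⟨z, ⟨hz.1, hz.2.trans hvx⟩, hgz⟩

namespace Real

theorem abs_sin_nat_mul_le (n : ℕ) (x : ℝ) : |sin (n * x)| ≤ n * |sin x| := by
  induction n with
  | zero => simp
  | succ n ih =>
    calc |sin ((n + 1 : ℕ) * x)| = |sin (n * x) * cos x + cos (n * x) * sin x| := by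
          push_cast; rw [add_mul, one_mul, sin_add]
      _ ≤ |sin (n * x)| * |cos x| + |cos (n * x)| * |sin x| := by
          rw [← abs_mul, ← abs_mul]; exact abs_add_le _ _
      _ ≤ n * |sin x| * 1 + 1 * |sin x| := by
          gcongr
          exacts [abs_cos_le_one x, abs_cos_le_one _]
      _ = (n + 1 : ℕ) * |sin x| := by push_cast; ring

theorem eq_of_cos_eq_of_sin_eq {t θ θ' : ℝ} (hθ : θ ∈ Ico t (t + 2 * π))
    (hθ' : θ' ∈ Ico t (t + 2 * π)) (hcos : cos θ = cos θ') (hsin : sin θ = sin θ') : θ = θ' :=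
  haveI : Fact (0 < 2 * π) := ⟨two_pi_pos⟩
  (AddCircle.coe_eq_coe_iff_of_mem_Ico hθ hθ').1 (Angle.cos_sin_inj hcos hsin)

theorem sin_eq_neg_of_cos_eq {t θ θ' : ℝ} (hθ : θ ∈ Ico t (t + 2 * π))
    (hθ' : θ' ∈ Ico t (t + 2 * π)) (hne : θ ≠ θ') (hcos : cos θ = cos θ') :
    sin θ' = -sin θ ∧ sin θ ≠ 0 := by
  have hsin : sin θ ≠ sin θ' := fun h => hne (eq_of_cos_eq_of_sin_eq hθ hθ' hcos h)
  have hsq : sin θ' ^ 2 = sin θ ^ 2 := by rw [sin_sq, sin_sq, hcos]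
  rcases sq_eq_sq_iff_eq_or_eq_neg.1 hsq with h | h
  · exact absurd h.symm hsin
  · exact ⟨h, fun h0 => hsin (by rw [h, h0, neg_zero])⟩

theorem card_filter_cos_eq_le_two {t : ℝ} {S : Finset ℝ} (hS : ↑S ⊆ Ico t (t + 2 * π))
    (x : ℝ) : (S.filter (fun θ => x = cos θ)).card ≤ 2 := by
  by_contra! h
  obtain ⟨θ₁, h₁, θ₂, h₂, θ₃, h₃, h₁₂, h₁₃, h₂₃⟩ := Finset.two_lt_card.1 h
  simp only [Finset.mem_filter] at h₁ h₂ h₃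
  have e₁₂ := sin_eq_neg_of_cos_eq (hS h₁.1) (hS h₂.1) h₁₂ (h₁.2.symm.trans h₂.2)
  have e₁₃ := sin_eq_neg_of_cos_eq (hS h₁.1) (hS h₃.1) h₁₃ (h₁.2.symm.trans h₃.2)
  have e₂₃ := sin_eq_neg_of_cos_eq (hS h₂.1) (hS h₃.1) h₂₃ (h₂.2.symm.trans h₃.2)
  exact e₁₂.2 (by linarith [e₁₂.1, e₁₃.1, e₂₃.1])

end Real

namespace Polynomial

theorem degree_derivative_lt_of_natDegree_le {R : Type*} [Semiring R] {M : ℕ} {p : R[X]}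
    (hp : p.natDegree ≤ M) : p.derivative.degree < M := by
  rcases eq_or_ne p 0 with rfl | hp0
  · simp
  exact (degree_derivative_lt hp0).trans_le (degree_le_of_natDegree_le hp)

theorem eq_zero_of_sq_eq_one_sub_X_sq_mul_sq {a b : ℝ[X]} (h : a ^ 2 = (1 - X ^ 2) * b ^ 2) :
    a = 0 ∧ b = 0 := by
  have hroot : ∀ x ∈ Ioi (1 : ℝ), a.IsRoot x ∧ b.IsRoot x := fun x (hx : 1 < x) => by
    have hx : a.eval x ^ 2 + (x ^ 2 - 1) * b.eval x ^ 2 = 0 := by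
      have := congrArg (eval x) h
      simp only [eval_mul, eval_pow, eval_sub, eval_one, eval_X] at this
      linarith
    have hx2 : 0 < x ^ 2 - 1 := by nlinarith
    have hb : (x ^ 2 - 1) * b.eval x ^ 2 = 0 := by
      linarith [sq_nonneg (a.eval x), mul_nonneg hx2.le (sq_nonneg (b.eval x))]
    rw [hb, add_zero] at hx
    exact ⟨pow_eq_zero_iff two_ne_zero |>.1 hx,
      pow_eq_zero_iff two_ne_zero |>.1 ((mul_eq_zero.1 hb).resolve_left hx2.ne')⟩
  exact ⟨eq_zero_of_infinite_isRoot a ((Ioi_infinite 1).mono fun x hx => (hroot x hx).1),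
    eq_zero_of_infinite_isRoot b ((Ioi_infinite 1).mono fun x hx => (hroot x hx).2)⟩

theorem natDegree_sq_sub_one_sub_X_sq_mul_sq_le {M : ℕ} {a b : ℝ[X]} (ha : a.degree ≤ M)
    (hb : b.degree < M) : (a ^ 2 - (1 - X ^ 2) * b ^ 2).natDegree ≤ 2 * M := by
  refine (natDegree_sub_le_of_le (natDegree_pow_le_of_le 2 (natDegree_le_of_degree_le ha))
    ?_).trans (max_self _).le
  rcases eq_or_ne b 0 with rfl | hb0
  · simp
  have hb' : b.natDegree < M := (natDegree_lt_iff_degree_lt hb0).2 hb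
  have hX : (1 - X ^ 2 : ℝ[X]).natDegree ≤ 2 := by compute_degree
  have := natDegree_mul_le (p := 1 - X ^ 2) (q := b ^ 2)
  have := natDegree_pow_le (p := b) (n := 2)
  omega

theorem map_cos_le_roots {a b : ℝ[X]} {t : ℝ} {S : Finset ℝ} (hS : ↑S ⊆ Ico t (t + 2 * π))
    (hzero : ∀ θ ∈ S, a.eval (cos θ) + sin θ * b.eval (cos θ) = 0)
    (hN0 : a ^ 2 - (1 - X ^ 2) * b ^ 2 ≠ 0) :
    S.val.map cos ≤ (a ^ 2 - (1 - X ^ 2) * b ^ 2).roots := by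
  classical
  rw [Multiset.le_iff_count]
  intro x
  rw [count_roots, Multiset.count_map, le_rootMultiplicity_iff hN0, ← Finset.filter_val,
    Finset.card_val]
  set F := S.filter (fun θ => x = cos θ)
  rcases F.eq_empty_or_nonempty with hF | ⟨θ, hθ⟩
  · simp [hF]
  rw [Finset.mem_filter] at hθ
  rcases le_or_gt F.card 1 with h1 | h2
  · refine (pow_dvd_pow _ h1).trans ?_
    have hN : (a ^ 2 - (1 - X ^ 2) * b ^ 2).eval (cos θ) =
        (a.eval (cos θ) + sin θ * b.eval (cos θ)) * (a.eval (cos θ) - sin θ * b.eval (cos θ)) := by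
      simp only [eval_sub, eval_mul, eval_pow, eval_one, eval_X]
      linear_combination (b.eval (cos θ)) ^ 2 * sin_sq_add_cos_sq θ
    rw [pow_one, dvd_iff_isRoot, IsRoot, hθ.2, hN, hzero θ hθ.1, zero_mul]
  -- Two zeros with the same cosine have opposite nonzero sines, so `a` and `b` vanish there.
  obtain ⟨θ₁, h₁, θ₂, h₂, hne⟩ := Finset.one_lt_card.1 h2
  simp only [F, Finset.mem_filter] at h₁ h₂
  obtain ⟨hsin, hsin0⟩ := sin_eq_neg_of_cos_eq (hS h₁.1) (hS h₂.1) hne (h₁.2.symm.trans h₂.2)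
  have e₁ := hzero θ₁ h₁.1
  have e₂ := hzero θ₂ h₂.1
  rw [← h₁.2] at e₁
  rw [← h₂.2, hsin] at e₂
  have hbx : b.IsRoot x :=
    (mul_eq_zero.1 (by linarith : sin θ₁ * b.eval x = 0)).resolve_left hsin0
  have hax : a.IsRoot x := by simp only [IsRoot] at hbx ⊢; linarith
  refine (pow_dvd_pow _ (card_filter_cos_eq_le_two hS x)).trans ?_
  exact dvd_sub (pow_dvd_pow_of_dvd (dvd_iff_isRoot.2 hax) 2)
    ((pow_dvd_pow_of_dvd (dvd_iff_isRoot.2 hbx) 2).mul_left _)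

end Polynomial

/-- Real trigonometric polynomials of degree at most `M`: since `cos (k θ) = T_k (cos θ)` and
`sin (k θ) = sin θ * U_{k-1} (cos θ)`, these are the functions `a (cos θ) + sin θ * b (cos θ)`
with `deg a ≤ M` and `deg b < M`. -/
def trigPoly (M : ℕ) : Submodule ℝ (ℝ → ℝ) where
  carrier := {f | ∃ a ∈ degreeLE ℝ M, ∃ b ∈ degreeLT ℝ M,
    f = fun θ => a.eval (cos θ) + sin θ * b.eval (cos θ)}
  add_mem' := by
    rintro _ _ ⟨a, ha, b, hb, rfl⟩ ⟨a', ha', b', hb', rfl⟩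
    exact ⟨a + a', add_mem ha ha', b + b', add_mem hb hb',
      by ext; simp only [Pi.add_apply, eval_add]; ring⟩
  zero_mem' := ⟨0, zero_mem _, 0, zero_mem _, by ext; simp⟩
  smul_mem' := by
    rintro c _ ⟨a, ha, b, hb, rfl⟩
    exact ⟨c • a, Submodule.smul_mem _ c ha, c • b, Submodule.smul_mem _ c hb,
      by ext; simp only [eval_smul, smul_eq_mul, Pi.smul_apply]; ring⟩

namespace trigPoly

variable {M : ℕ} {f : ℝ → ℝ} {K : ℝ}

theorem continuous_of_mem (hf : f ∈ trigPoly M) : Continuous f := by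
  obtain ⟨a, -, b, -, rfl⟩ := hf
  fun_prop

theorem eval_cos_mem {p : ℝ[X]} (hp : p.natDegree ≤ M) :
    (fun θ => p.eval (cos θ)) ∈ trigPoly M :=
  ⟨p, mem_degreeLE.2 (degree_le_of_natDegree_le hp), 0, zero_mem _, by ext; simp⟩

theorem sin_mul_eval_cos_mem {p : ℝ[X]} (hp : p.degree < M) :
    (fun θ => sin θ * p.eval (cos θ)) ∈ trigPoly M :=
  ⟨0, zero_mem _, p, mem_degreeLT.2 hp, by ext; simp⟩

theorem cos_nat_mul_mem : (fun θ => cos (M * θ)) ∈ trigPoly M := by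
  simpa [Chebyshev.T_real_cos] using eval_cos_mem (M := M) (p := Chebyshev.T ℝ M)
    (by simp [Chebyshev.natDegree_T])

theorem sin_nat_mul_mem : (fun θ => sin (M * θ)) ∈ trigPoly M := by
  cases M with
  | zero => simp only [CharP.cast_eq_zero, zero_mul, sin_zero]; exact zero_mem _
  | succ m =>
    convert sin_mul_eval_cos_mem (M := m + 1) (p := Chebyshev.U ℝ m)
      (by rw [Chebyshev.degree_U_natCast]; exact_mod_cast m.lt_succ_self) using 2 with θ
    rw [mul_comm (sin θ), Chebyshev.U_real_cos]
    push_cast; ring_nf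

theorem sin_nat_mul_sub_mem (t : ℝ) : (fun θ => sin (M * (θ - t))) ∈ trigPoly M := by
  convert sub_mem (Submodule.smul_mem _ (cos (M * t)) sin_nat_mul_mem)
    (Submodule.smul_mem _ (sin (M * t)) cos_nat_mul_mem) using 1
  ext θ
  simp only [Pi.sub_apply, Pi.smul_apply, smul_eq_mul, mul_sub, sin_sub]
  ring

theorem eq_zero_of_two_mul_lt_card (hf : f ∈ trigPoly M) {t : ℝ} {S : Finset ℝ}
    (hS : ↑S ⊆ Ico t (t + 2 * π)) (hzero : ∀ θ ∈ S, f θ = 0) (hcard : 2 * M < S.card) :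
    f = 0 := by
  obtain ⟨a, ha, b, hb, rfl⟩ := hf
  by_cases hN0 : a ^ 2 - (1 - X ^ 2) * b ^ 2 = 0
  · obtain ⟨rfl, rfl⟩ := eq_zero_of_sq_eq_one_sub_X_sq_mul_sq (sub_eq_zero.1 hN0)
    ext θ
    simp
  have := (Multiset.card_le_card (map_cos_le_roots hS hzero hN0)).trans ((card_roots' _).trans
    (natDegree_sq_sub_one_sub_X_sq_mul_sq_le (mem_degreeLE.1 ha) (mem_degreeLT.1 hb)))
  simp only [Multiset.card_map, Finset.card_val] at this
  omega

theorem eq_of_alternating (hf : f ∈ trigPoly M) {e : ℕ → ℝ} (he : StrictMono e)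
    (hperiod : e (2 * M) = e 0 + 2 * π) (hsign : ∀ k ≤ 2 * M, 0 < (-1) ^ k * f (e k))
    {x y : ℝ} (hx : x ∈ Ioo (e 0) (e 1)) (hy : y ∈ Ioo (e 0) (e 1))
    (hfx : f x = 0) (hfy : f y = 0) : x = y := by
  by_contra hxy
  have hM : 0 < M := Nat.pos_of_ne_zero fun h => by subst h; simp [pi_ne_zero] at hperiod
  -- Together with `x` and `y`, the `2M - 1` sign changes between `e 1` and `e (2M)` give
  -- `2M + 1` zeros in one period.
  obtain ⟨S, hcard, hsub, hzero⟩ := exists_finset_zeros_of_mul_neg (continuous_of_mem hf)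
    (e := fun k => e (k + 1)) (he.comp (strictMono_id.add_const 1)) (n := 2 * M - 1) (by
      intro k hk
      have h := mul_pos (hsign (k + 1) (by omega)) (hsign (k + 1 + 1) (by omega))
      rcases neg_one_pow_eq_or ℝ (k + 1) with hk | hk <;>
        rw [pow_succ _ (k + 1), hk] at h <;> nlinarith)
  simp only [zero_add, show 2 * M - 1 + 1 = 2 * M by omega] at hsub
  have hxS : x ∉ S := fun h => (hsub h).1.not_gt hx.2
  have hyS : y ∉ S := fun h => (hsub h).1.not_gt hy.2
  have hsub' : ↑(insert x (insert y S)) ⊆ Ico (e 0) (e 0 + 2 * π) := by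
    rw [← hperiod, Finset.coe_insert, Finset.coe_insert, insert_subset_iff, insert_subset_iff]
    have he1 : e 1 ≤ e (2 * M) := he.monotone (by omega)
    exact ⟨⟨hx.1.le, hx.2.trans_le he1⟩, ⟨hy.1.le, hy.2.trans_le he1⟩,
      hsub.trans (Ioo_subset_Ico_self.trans (Ico_subset_Ico_left (he zero_lt_one).le))⟩
  have hf0 := eq_zero_of_two_mul_lt_card hf hsub' (by simpa [hfx, hfy] using hzero) (by
    rw [Finset.card_insert_of_notMem (by simp [hxy, hxS]), Finset.card_insert_of_notMem hyS,
      hcard]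
    omega)
  simpa [hf0] using hsign 0 (Nat.zero_le _)

theorem eq_of_eq_sin_nat_mul_sub (hM : 0 < M) (hf : f ∈ trigPoly M) (hlt : ∀ θ, |f θ| < 1)
    {t x y : ℝ} (hx : |x - t| < π / (2 * M)) (hy : |y - t| < π / (2 * M))
    (hfx : f x = sin (M * (x - t))) (hfy : f y = sin (M * (y - t))) : x = y := by
  have hMpos : (0 : ℝ) < M := by exact_mod_cast hM
  set e : ℕ → ℝ := fun k => t + (2 * k - 1) * (π / (2 * M)) with he
  have hMe : ∀ k : ℕ, M * (e k - t) = k * π - π / 2 := fun k => by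
    simp only [he]; field_simp; ring
  have he_mono : StrictMono e := fun i j hij => by
    simp only [he]; gcongr
  have hmem : ∀ {θ}, |θ - t| < π / (2 * M) → θ ∈ Ioo (e 0) (e 1) := fun hθ => by
    simp only [he]; constructor <;> linarith [abs_lt.1 hθ]
  refine eq_of_alternating (sub_mem hf (sin_nat_mul_sub_mem t)) he_mono ?_ ?_ (hmem hx) (hmem hy)
    (sub_eq_zero.2 hfx) (sub_eq_zero.2 hfy)
  · simp only [he]; push_cast; field_simp; ring
  · intro k _
    simp only [Pi.sub_apply, hMe, sin_sub_pi_div_two, cos_nat_mul_pi]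
    rcases neg_one_pow_eq_or ℝ k with h | h <;> rw [h] <;> linarith [abs_lt.1 (hlt (e k))]

theorem le_mul_cos_arcsin_of_hasDerivAt (hM : 0 < M) (hf : f ∈ trigPoly M)
    (hlt : ∀ θ, |f θ| < 1) {D θ₀ : ℝ} (hD : HasDerivAt f D θ₀) :
    D ≤ M * cos (arcsin (f θ₀)) := by
  by_contra! hDβ
  have hMpos : (0 : ℝ) < M := by exact_mod_cast hM
  set β := arcsin (f θ₀)
  have hβ : |β| < π / 2 := abs_lt.2
    ⟨neg_pi_div_two_lt_arcsin.2 (abs_lt.1 (hlt θ₀)).1, arcsin_lt_pi_div_two.2 (abs_lt.1 (hlt θ₀)).2⟩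
  set t := θ₀ - β / M
  have hMθ₀ : M * (θ₀ - t) = β := by simp only [t]; field_simp; ring
  have hθ₀ : |θ₀ - t| < π / (2 * M) := by
    rw [show θ₀ - t = β / M by simp only [t]; ring, abs_div, Nat.abs_cast,
      div_lt_div_iff₀ hMpos (by positivity)]
    nlinarith
  set g := fun θ => f θ - sin (M * (θ - t))
  have hg0 : g θ₀ = 0 := by
    simp only [g, hMθ₀, β, sin_arcsin (abs_le.1 (hlt θ₀).le).1 (abs_le.1 (hlt θ₀).le).2, sub_self]
  have hgD : HasDerivAt g (D - cos β * (M * 1)) θ₀ := by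
    refine hD.sub ?_
    rw [← hMθ₀]
    exact (((hasDerivAt_id θ₀).sub_const t).const_mul (M : ℝ)).sin
  have hga : 0 < g (t - π / (2 * M)) := by
    have : M * (t - π / (2 * M) - t) = -(π / 2) := by field_simp; ring
    simp only [g, this, sin_neg, sin_pi_div_two]
    linarith [abs_lt.1 (hlt (t - π / (2 * M)))]
  obtain ⟨x, hx, hgx⟩ := exists_mem_Ioo_eq_zero_of_hasDerivAt_pos
    ((continuous_of_mem hf).sub (by fun_prop)) hgD (by linarith) hg0
    (by linarith [abs_lt.1 hθ₀]) hga
  have hxt : |x - t| < π / (2 * M) :=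
    abs_lt.2 ⟨by linarith [hx.1], by linarith [hx.2, abs_lt.1 hθ₀]⟩
  exact hx.2.ne (eq_of_eq_sin_nat_mul_sub hM hf hlt hxt hθ₀ (sub_eq_zero.1 hgx)
    (sub_eq_zero.1 hg0))

theorem abs_le_mul_of_hasDerivAt (hM : 0 < M) (hf : f ∈ trigPoly M) (hb : ∀ θ, |f θ| ≤ K)
    {D θ₀ : ℝ} (hD : HasDerivAt f D θ₀) : |D| ≤ M * K := by
  wlog hD0 : 0 ≤ D generalizing f D
  · simpa using this (neg_mem hf) (by simpa using hb) hD.neg (by linarith)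
  rw [abs_of_nonneg hD0]
  by_contra! hDK
  have hMpos : (0 : ℝ) < M := by exact_mod_cast hM
  obtain ⟨ρ, hKρ, hρD⟩ := exists_between ((lt_div_iff₀' hMpos).2 hDK)
  have hρ : 0 < ρ := ((abs_nonneg _).trans (hb 0)).trans_lt hKρ
  have hlt : ∀ θ, |(ρ⁻¹ • f) θ| < 1 := fun θ => by
    rw [Pi.smul_apply, smul_eq_mul, abs_mul, abs_inv, abs_of_pos hρ, inv_mul_lt_one₀ hρ]
    exact (hb θ).trans_lt hKρ
  have h := le_mul_cos_arcsin_of_hasDerivAt hM (Submodule.smul_mem _ ρ⁻¹ hf) hlt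
    (hD.const_mul ρ⁻¹)
  have hcos := cos_le_one (arcsin ((ρ⁻¹ • f) θ₀))
  have : ρ⁻¹ * D ≤ M := h.trans (by nlinarith)
  rw [inv_mul_le_iff₀ hρ] at this
  rw [lt_div_iff₀' hMpos] at hρD
  linarith

theorem abs_le_mul_abs_sin_nat_mul_sub (hM : 0 < M) (hf : f ∈ trigPoly M)
    (hb : ∀ θ, |f θ| ≤ K) {t θ : ℝ} (ht : f t = 0) (hθ : |θ - t| < π / (2 * M)) :
    |f θ| ≤ K * |sin (M * (θ - t))| := by
  by_contra! hlt
  have hK : 0 ≤ K := (abs_nonneg _).trans (hb 0)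
  have hfθ : 0 < |f θ| := (mul_nonneg hK (abs_nonneg _)).trans_lt hlt
  -- Rescaled to meet the wave at `θ`, `f` still meets it at its zero `t`.
  set c := sin (M * (θ - t)) / f θ
  have hc : ∀ φ, |(c • f) φ| < 1 := fun φ => by
    rw [Pi.smul_apply, smul_eq_mul, abs_mul, abs_div, div_mul_eq_mul_div, div_lt_one hfθ]
    calc |sin (M * (θ - t))| * |f φ| ≤ |sin (M * (θ - t))| * K := by gcongr; exact hb φ
      _ < |f θ| := by rwa [mul_comm]
  have hθt := eq_of_eq_sin_nat_mul_sub hM (Submodule.smul_mem _ c hf) hc (x := θ) (y := t) hθ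
    (by simpa using div_pos pi_pos (by positivity : (0 : ℝ) < 2 * M))
    (by simp [c, div_mul_cancel₀ _ (abs_pos.1 hfθ)]) (by simp [ht])
  rw [hθt, ht, abs_zero] at hfθ
  exact lt_irrefl _ hfθ

theorem abs_le_mul_mul_abs_sin_sub (hM : 0 < M) (hf : f ∈ trigPoly M)
    (hb : ∀ θ, |f θ| ≤ K) {t θ : ℝ} (ht : f t = 0) (hθ : |θ - t| ≤ π / 2) :
    |f θ| ≤ M * K * |sin (θ - t)| := by
  have hMpos : (0 : ℝ) < M := by exact_mod_cast hM
  have hK : 0 ≤ K := (abs_nonneg _).trans (hb 0)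
  rcases lt_or_ge |θ - t| (π / (2 * M)) with hnear | hfar
  · calc |f θ| ≤ K * |sin (M * (θ - t))| := abs_le_mul_abs_sin_nat_mul_sub hM hf hb ht hnear
      _ ≤ K * (M * |sin (θ - t)|) := by gcongr; exact abs_sin_nat_mul_le M _
      _ = M * K * |sin (θ - t)| := by ring
  · have h1 : 1 ≤ M * |sin (θ - t)| :=
      calc (1 : ℝ) = M * (2 / π * (π / (2 * M))) := by field_simp
        _ ≤ M * (2 / π * |θ - t|) := by gcongr
        _ ≤ M * |sin (θ - t)| := by gcongr; exact mul_abs_le_abs_sin hθ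
    calc |f θ| ≤ K * 1 := by rw [mul_one]; exact hb θ
      _ ≤ K * (M * |sin (θ - t)|) := by gcongr
      _ = M * K * |sin (θ - t)| := by ring

end trigPoly

section Markov

variable {M : ℕ} {p : ℝ[X]} {K : ℝ}

theorem abs_sin_mul_eval_derivative_cos_le (hM : 0 < M) (hp : p.natDegree ≤ M)
    (hb : ∀ x ∈ Icc (-1 : ℝ) 1, |p.eval x| ≤ K) (θ : ℝ) :
    |sin θ * p.derivative.eval (cos θ)| ≤ M * K := by
  have hD : HasDerivAt (fun θ => p.eval (cos θ)) (p.derivative.eval (cos θ) * -sin θ) θ :=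
    (p.hasDerivAt (cos θ)).comp θ (hasDerivAt_cos θ)
  simpa [abs_mul, mul_comm] using trigPoly.abs_le_mul_of_hasDerivAt hM (trigPoly.eval_cos_mem hp)
    (fun θ => hb _ (cos_mem_Icc θ)) hD

theorem abs_eval_derivative_le_of_mem_Ioo (hM : 0 < M) (hp : p.natDegree ≤ M)
    (hb : ∀ x ∈ Icc (-1 : ℝ) 1, |p.eval x| ≤ K) {x : ℝ} (hx : x ∈ Ioo (-1 : ℝ) 1) :
    |p.derivative.eval x| ≤ M ^ 2 * K := by
  set f := fun θ => sin θ * p.derivative.eval (cos θ)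
  have hf : f ∈ trigPoly M :=
    trigPoly.sin_mul_eval_cos_mem (degree_derivative_lt_of_natDegree_le hp)
  have hfb := abs_sin_mul_eval_derivative_cos_le hM hp hb
  obtain ⟨θ, hθ, rfl⟩ : ∃ θ ∈ Ioo 0 π, cos θ = x :=
    ⟨arccos x, ⟨arccos_pos.2 hx.2, arccos_lt_pi.2 hx.1⟩, cos_arccos hx.1.le hx.2.le⟩
  have hsin : 0 < sin θ := sin_pos_of_pos_of_lt_pi hθ.1 hθ.2
  have key : |f θ| ≤ M * (M * K) * |sin θ| := by
    rcases le_or_gt θ (π / 2) with h | h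
    · have := trigPoly.abs_le_mul_mul_abs_sin_sub hM hf hfb (t := 0) (by simp [f])
        (by rwa [sub_zero, abs_of_pos hθ.1])
      rwa [sub_zero] at this
    · have := trigPoly.abs_le_mul_mul_abs_sin_sub hM hf hfb (t := π) (by simp [f])
        (by rw [abs_sub_comm, abs_of_pos (by linarith [hθ.2])]; linarith)
      rwa [sin_sub_pi, abs_neg] at this
  simp only [f, abs_mul, abs_of_pos hsin] at key
  rw [sq, mul_assoc]
  exact le_of_mul_le_mul_left (key.trans_eq (mul_comm _ _)) hsin

theorem abs_eval_derivative_le (hp : p.natDegree ≤ M)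
    (hb : ∀ x ∈ Icc (-1 : ℝ) 1, |p.eval x| ≤ K) {x : ℝ} (hx : x ∈ Icc (-1 : ℝ) 1) :
    |p.derivative.eval x| ≤ M ^ 2 * K := by
  rcases M.eq_zero_or_pos with rfl | hM
  · simp [derivative_of_natDegree_zero (Nat.le_zero.1 hp)]
  have hclosed : IsClosed {x | |p.derivative.eval x| ≤ M ^ 2 * K} :=
    isClosed_le (by fun_prop) continuous_const
  rw [← closure_Ioo (by norm_num : (-1 : ℝ) ≠ 1)] at hx
  exact hclosed.closure_subset_iff.2 (fun y hy => abs_eval_derivative_le_of_mem_Ioo hM hp hb hy) hx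

end Markov

theorem markov_inequality (M : ℕ) (p : Polynomial ℝ) (hp : p.natDegree ≤ M) :
    ⨆ x : Set.Icc (-1:ℝ) 1, |p.derivative.eval (x : ℝ)| ≤
      (M : ℝ)^2 * ⨆ x : Set.Icc (-1:ℝ) 1, |p.eval (x : ℝ)| := by
  have hbdd : BddAbove (range fun x : Icc (-1 : ℝ) 1 => |p.eval (x : ℝ)|) :=
    (isCompact_range (by fun_prop)).bddAbove
  have : Nonempty (Icc (-1 : ℝ) 1) := ⟨⟨0, by norm_num, by norm_num⟩⟩
  exact ciSup_le fun x => abs_eval_derivative_le hp (fun y hy => le_ciSup hbdd ⟨y, hy⟩) x.2
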